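/- arXiv:1810.02036 — 3 statements merged into one kernel-verified Lean document; each statement's English description precedes it below -/
import Mathlib

section
/- The function k(v) = Σ_{n=1}^{∞} (-1)^{n+1} n² e^{-n²v/2} on (0,∞) is a probability density: k(v) ≥ 0 for all v > 0 and ∫₀^∞ k(v) dv = 1. -/
/-!
Let `F(v) = ∑_{n ∈ ℤ} (-1)^n e^{-n² v/2}`, which is Mathlib's `cosKernel (1/2)` at `v / (2π)`.
Differentiating `F = 1 - 2 ∑_{n ≥ 0} (-1)^n e^{-(n+1)² v/2}` termwise gives `F' = k`, and the
asymptotics of the theta kernels give `F(0+) = 0` and `F(∞) = 1`, so `∫₀^∞ k = 1` once `k ≥ 0`.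

For `v ≥ 2` the terms `n² e^{-n² v/2}` decrease in `n`, so `k(v)` is an alternating series with
nonnegative sum. For `v < π²` we use the Jacobi transformation
`F(v) = √(2π) ∑_{n ∈ ℤ} v^{-1/2} e^{-2π²(n+1/2)²/v}`: each term `v^{-1/2} e^{-c/v}` increases on
`(0, 2c] ⊇ (0, π²]`, so `F` is monotone there and `k = F' ≥ 0`.
-/

open MeasureTheory Real Set Filter Topology HurwitzZeta

noncomputable section

lemma summable_sq_mul_exp_neg_sq_mul {s : ℝ} (hs : 0 < s) :
    Summable fun n : ℕ ↦ ((n : ℝ) + 1) ^ 2 * exp (-((n : ℝ) + 1) ^ 2 * s) := by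
  refine (HurwitzKernelBounds.summable_f_nat 2 1 (div_pos hs pi_pos)).congr fun n ↦ ?_
  rw [HurwitzKernelBounds.f_nat]
  congr 2
  field_simp

lemma hasDerivAt_tsum_mul_exp_neg_sq_mul {c : ℕ → ℝ} (hc : ∀ n, ‖c n‖ ≤ 1) {t : ℝ}
    (ht : 0 < t) :
    HasDerivAt (fun u ↦ ∑' n : ℕ, c n * exp (-((n : ℝ) + 1) ^ 2 * u))
      (∑' n : ℕ, -(c n * ((n : ℝ) + 1) ^ 2 * exp (-((n : ℝ) + 1) ^ 2 * t))) t := by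
  have hmem : t ∈ Ioi (t / 2) := half_lt_self ht
  refine hasDerivAt_tsum_of_isPreconnected
    (g := fun n u ↦ c n * exp (-((n : ℝ) + 1) ^ 2 * u))
    (g' := fun n u ↦ -(c n * ((n : ℝ) + 1) ^ 2 * exp (-((n : ℝ) + 1) ^ 2 * u)))
    (summable_sq_mul_exp_neg_sq_mul (half_pos ht)) isOpen_Ioi isPreconnected_Ioi
    (fun n u _ ↦ ?_) (fun n u hu ↦ ?_) hmem ?_ hmem
  · exact (((hasDerivAt_id' u).const_mul (-((n : ℝ) + 1) ^ 2)).exp.const_mul (c n)).congr_deriv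
      (by ring)
  · have hexp : exp (-((n : ℝ) + 1) ^ 2 * u) ≤ exp (-((n : ℝ) + 1) ^ 2 * (t / 2)) :=
      exp_le_exp.mpr (by nlinarith [mem_Ioi.mp hu])
    rw [norm_neg, norm_mul, norm_mul, norm_of_nonneg (sq_nonneg _), norm_of_nonneg (exp_nonneg _)]
    calc _ ≤ 1 * ((n : ℝ) + 1) ^ 2 * exp (-((n : ℝ) + 1) ^ 2 * (t / 2)) := by
          gcongr
          exact hc n
      _ = _ := by rw [one_mul]
  · refine (summable_sq_mul_exp_neg_sq_mul ht).of_norm_bounded fun n ↦ ?_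
    rw [norm_mul, norm_of_nonneg (exp_nonneg _)]
    gcongr
    calc ‖c n‖ ≤ 1 := hc n
      _ ≤ ((n : ℝ) + 1) ^ 2 := by nlinarith [(n.cast_nonneg : (0 : ℝ) ≤ n)]

lemma hasDerivAt_inv_sqrt_mul_exp_neg_div (c : ℝ) {v : ℝ} (hv : 0 < v) :
    HasDerivAt (fun u ↦ (√u)⁻¹ * exp (-c / u))
      ((√v)⁻¹ * exp (-c / v) * (c / v ^ 2 - 1 / (2 * v))) v := by
  have hs : √v ≠ 0 := by positivity
  have hinv := (hasDerivAt_sqrt hv.ne').inv hs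
  have hexp := ((hasDerivAt_inv hv.ne').const_mul (-c)).exp
  refine (hinv.mul (hexp.congr_of_eventuallyEq ?_)).congr_deriv ?_
  · filter_upwards with u
    rw [div_eq_mul_inv]
  · simp only [Pi.inv_apply]
    set s := √v
    have hsv : s ^ 2 = v := sq_sqrt hv.le
    rw [← hsv]
    field_simp
    ring

lemma monotoneOn_inv_sqrt_mul_exp_neg_div (c : ℝ) :
    MonotoneOn (fun v ↦ (√v)⁻¹ * exp (-c / v)) (Ioc 0 (2 * c)) := by
  have hd (v : ℝ) (hv : v ∈ Ioc 0 (2 * c)) := hasDerivAt_inv_sqrt_mul_exp_neg_div c hv.1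
  refine monotoneOn_of_hasDerivWithinAt_nonneg (convex_Ioc 0 (2 * c))
    (fun v hv ↦ (hd v hv).continuousAt.continuousWithinAt)
    (fun v hv ↦ (hd v (interior_subset hv)).hasDerivWithinAt)
    fun v hv ↦ ?_
  rw [interior_Ioc] at hv
  obtain ⟨hv0, hvc⟩ := hv
  have : 1 / (2 * v) ≤ c / v ^ 2 := by
    rw [div_le_div_iff₀ (by positivity) (by positivity)]
    nlinarith
  have := sub_nonneg.mpr this
  positivity

lemma HasDerivAt.nonneg_of_monotoneOn_of_mem_nhds {f : ℝ → ℝ} {f' x : ℝ} {s : Set ℝ}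
    (hd : HasDerivAt f f' x) (hf : MonotoneOn f s) (hs : s ∈ 𝓝 x) : 0 ≤ f' :=
  hd.hasDerivWithinAt.nonneg_of_monotoneOn
    (by simpa using (PerfectSpace.univ_preperfect x trivial).nhds_inter hs) hf

lemma sq_mul_exp_neg_sq_mul_le {x v : ℝ} (hx : 1 ≤ x) (hv : 2 ≤ v) :
    (x + 1) ^ 2 * exp (-(x + 1) ^ 2 * v / 2) ≤ x ^ 2 * exp (-x ^ 2 * v / 2) := by
  have hsplit : exp (-(x + 1) ^ 2 * v / 2) =
      exp (-x ^ 2 * v / 2) / exp ((2 * x + 1) * v / 2) := by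
    rw [← exp_sub]; ring_nf
  have h4 : 4 ≤ exp ((2 * x + 1) * v / 2) := by
    nlinarith [add_one_le_exp ((2 * x + 1) * v / 2)]
  calc (x + 1) ^ 2 * exp (-(x + 1) ^ 2 * v / 2)
      = (x + 1) ^ 2 / exp ((2 * x + 1) * v / 2) * exp (-x ^ 2 * v / 2) := by
        rw [hsplit]; ring
    _ ≤ (x + 1) ^ 2 / 4 * exp (-x ^ 2 * v / 2) := by gcongr
    _ ≤ x ^ 2 * exp (-x ^ 2 * v / 2) := by gcongr; nlinarith

lemma antitone_sq_mul_exp_neg_sq_mul {v : ℝ} (hv : 2 ≤ v) :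
    Antitone fun n : ℕ ↦ ((n : ℝ) + 1) ^ 2 * exp (-((n : ℝ) + 1) ^ 2 * v / 2) :=
  antitone_nat_of_succ_le fun n ↦ by
    push_cast
    exact sq_mul_exp_neg_sq_mul_le (by linarith [n.cast_nonneg (α := ℝ)]) hv

lemma one_le_two_mul_add_one_sq (n : ℤ) : (1 : ℝ) ≤ (2 * n + 1) ^ 2 := by
  rcases le_or_gt 0 n with h | h
  · have : (0 : ℝ) ≤ n := by exact_mod_cast h
    nlinarith
  · have : (n : ℝ) ≤ -1 := by exact_mod_cast (by omega : n ≤ -1)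
    nlinarith

namespace KolmogorovSmirnov

def density (v : ℝ) : ℝ :=
  ∑' n : ℕ, (-1 : ℝ) ^ n * ((n : ℝ) + 1) ^ 2 * exp (-((n : ℝ) + 1) ^ 2 * v / 2)

def cdf (v : ℝ) : ℝ := cosKernel ((1 / 2 : ℝ) : UnitAddCircle) (v / (2 * π))

lemma hasSum_cdf {v : ℝ} (hv : 0 < v) :
    HasSum (fun n : ℕ ↦ -2 * ((-1 : ℝ) ^ n * exp (-((n : ℝ) + 1) ^ 2 * (v / 2)))) (cdf v - 1) := by
  refine (hasSum_nat_cosKernel₀ (1 / 2) (div_pos hv two_pi_pos)).congr_fun fun n ↦ ?_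
  have hcos : cos (2 * π * (1 / 2) * ((n : ℝ) + 1)) = -(-1) ^ n := by
    rw [show 2 * π * (1 / 2) * ((n : ℝ) + 1) = ((n + 1 : ℕ) : ℝ) * π by push_cast; ring,
      cos_nat_mul_pi, pow_succ]
    ring
  rw [hcos]
  field_simp

lemma hasDerivAt_cdf {v : ℝ} (hv : 0 < v) : HasDerivAt cdf (density v) v := by
  have hc : ∀ n : ℕ, ‖(-1 : ℝ) ^ n‖ ≤ 1 := fun n ↦ by simp
  have hS := (((hasDerivAt_tsum_mul_exp_neg_sq_mul hc (half_pos hv)).comp v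
    ((hasDerivAt_id v).div_const 2)).const_mul (-2)).const_add 1
  refine hS.congr_of_eventuallyEq ?_ |>.congr_deriv ?_
  · filter_upwards [Ioi_mem_nhds hv] with u hu
    simp only [Function.comp, id]
    linarith [tsum_mul_left.symm.trans (hasSum_cdf hu).tsum_eq]
  · simp only [density, tsum_neg, mul_div_assoc]
    ring

lemma coe_one_half_ne_zero : ((1 / 2 : ℝ) : UnitAddCircle) ≠ 0 := by
  rw [Ne, AddCircle.coe_eq_zero_iff_of_mem_Ico (by norm_num)]
  norm_num

lemma cdf_eq_sqrt_mul_evenKernel {v : ℝ} (hv : 0 < v) :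
    cdf v = √(2 * π / v) * evenKernel ((1 / 2 : ℝ) : UnitAddCircle) (2 * π / v) := by
  have : 0 < √(2 * π / v) := by positivity
  rw [evenKernel_functional_equation, one_div_div, ← sqrt_eq_rpow, cdf]
  field_simp

lemma hasSum_cdf_dual {v : ℝ} (hv : 0 < v) :
    HasSum (fun n : ℤ ↦ √(2 * π) * ((√v)⁻¹ * exp (-(2 * π ^ 2 * ((n : ℝ) + 1 / 2) ^ 2) / v)))
      (cdf v) := by
  rw [cdf_eq_sqrt_mul_evenKernel hv, sqrt_div two_pi_pos.le]
  refine ((hasSum_int_evenKernel (1 / 2) (by positivity)).mul_left (√(2 * π) / √v)).congr_fun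
    fun n ↦ ?_
  field_simp

lemma monotoneOn_cdf : MonotoneOn cdf (Ioc 0 (π ^ 2)) := by
  intro v hv w hw hvw
  refine hasSum_le (fun n ↦ ?_) (hasSum_cdf_dual hv.1) (hasSum_cdf_dual hw.1)
  have hsub : Ioc 0 (π ^ 2) ⊆ Ioc 0 (2 * (2 * π ^ 2 * ((n : ℝ) + 1 / 2) ^ 2)) := by
    refine Ioc_subset_Ioc_right ?_
    nlinarith [one_le_two_mul_add_one_sq n, sq_nonneg π]
  exact mul_le_mul_of_nonneg_left
    (monotoneOn_inv_sqrt_mul_exp_neg_div _ (hsub hv) (hsub hw) hvw) (sqrt_nonneg _)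

lemma density_nonneg_of_lt_pi_sq {v : ℝ} (hv : 0 < v) (hvπ : v < π ^ 2) : 0 ≤ density v :=
  (hasDerivAt_cdf hv).nonneg_of_monotoneOn_of_mem_nhds monotoneOn_cdf (Ioc_mem_nhds hv hvπ)

lemma density_nonneg_of_two_le {v : ℝ} (hv : 2 ≤ v) : 0 ≤ density v := by
  have hsum : Summable fun n : ℕ ↦
      (-1 : ℝ) ^ n * (((n : ℝ) + 1) ^ 2 * exp (-((n : ℝ) + 1) ^ 2 * v / 2)) := by
    refine (summable_sq_mul_exp_neg_sq_mul (s := v / 2) (by linarith)).of_norm_bounded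
      fun n ↦ ?_
    rw [norm_mul, norm_pow, norm_neg, norm_one, one_pow, one_mul, norm_of_nonneg (by positivity),
      mul_div_assoc]
  simpa [density, mul_assoc] using
    (antitone_sq_mul_exp_neg_sq_mul hv).alternating_series_le_tendsto hsum.hasSum.tendsto_sum_nat 0

lemma density_nonneg {v : ℝ} (hv : 0 < v) : 0 ≤ density v := by
  rcases lt_or_ge v (π ^ 2) with hvπ | hvπ
  · exact density_nonneg_of_lt_pi_sq hv hvπ
  · exact density_nonneg_of_two_le (by nlinarith [pi_gt_three])

lemma cdf_zero : cdf 0 = 0 := by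
  rw [cdf, zero_div]
  exact cosKernel_undef _ le_rfl

lemma tendsto_cdf_atTop : Tendsto cdf atTop (𝓝 1) := by
  obtain ⟨p, hp, hO⟩ := isBigO_atTop_cosKernel_sub ((1 / 2 : ℝ) : UnitAddCircle)
  have hexp : Tendsto (fun x ↦ exp (-p * x)) atTop (𝓝 0) :=
    tendsto_exp_atBot.comp (tendsto_id.const_mul_atTop_of_neg (neg_neg_of_pos hp))
  have := (hO.trans_tendsto hexp).add_const 1
  simp only [sub_add_cancel, zero_add] at this
  exact this.comp (tendsto_id.atTop_div_const two_pi_pos)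

lemma tendsto_cdf_nhdsGT_zero : Tendsto cdf (𝓝[>] 0) (𝓝 0) := by
  obtain ⟨p, hp, hO⟩ := isBigO_atTop_evenKernel_sub ((1 / 2 : ℝ) : UnitAddCircle)
  simp only [if_neg coe_one_half_ne_zero, sub_zero] at hO
  have hsqrt : Tendsto (fun y : ℝ ↦ √y * exp (-p * y)) atTop (𝓝 0) :=
    (tendsto_rpow_mul_exp_neg_mul_atTop_nhds_zero (1 / 2) p hp).congr' <|
      Eventually.of_forall fun y ↦ by simp only [sqrt_eq_rpow]
  have hK := ((Asymptotics.isBigO_refl (fun y ↦ √y) atTop).mul hO).trans_tendsto hsqrt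
  have hinv : Tendsto (fun v : ℝ ↦ 2 * π / v) (𝓝[>] 0) atTop :=
    tendsto_inv_nhdsGT_zero.const_mul_atTop two_pi_pos |>.congr fun v ↦ (div_eq_mul_inv _ _).symm
  refine (hK.comp hinv).congr' ?_
  filter_upwards [self_mem_nhdsWithin] with v hv
  exact (cdf_eq_sqrt_mul_evenKernel hv).symm

end KolmogorovSmirnov

end

/-- The Kolmogorov–Smirnov density `k(v) = ∑_{n ≥ 1} (-1)^{n+1} n² e^{-n²v/2}` is a
probability density on `(0, ∞)`. -/
theorem kolmogorov_smirnov_is_density :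
    (∀ v : ℝ, 0 < v →
        0 ≤ ∑' n : ℕ, (-1 : ℝ) ^ n * ((n : ℝ) + 1) ^ 2 *
          Real.exp (-((n : ℝ) + 1) ^ 2 * v / 2)) ∧
      (∫ v in Ioi (0 : ℝ),
          ∑' n : ℕ, (-1 : ℝ) ^ n * ((n : ℝ) + 1) ^ 2 *
            Real.exp (-((n : ℝ) + 1) ^ 2 * v / 2)) = 1 := by
  refine ⟨fun v hv ↦ KolmogorovSmirnov.density_nonneg hv, ?_⟩
  have hcont : ContinuousWithinAt KolmogorovSmirnov.cdf (Ici 0) 0 := by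
    rw [← continuousWithinAt_Ioi_iff_Ici, ContinuousWithinAt, KolmogorovSmirnov.cdf_zero]
    exact KolmogorovSmirnov.tendsto_cdf_nhdsGT_zero
  have hFTC := integral_Ioi_of_hasDerivAt_of_nonneg hcont
    (fun v hv ↦ KolmogorovSmirnov.hasDerivAt_cdf hv)
    (fun v hv ↦ KolmogorovSmirnov.density_nonneg hv) KolmogorovSmirnov.tendsto_cdf_atTop
  rwa [KolmogorovSmirnov.cdf_zero, sub_zero] at hFTC
end

section
/- Let μ be a probability measure on (0,∞) such that f(x) = ∫₀^∞ e^{-x²/(2v)} μ(dv)/√(2πv) is in L²(ℝ). For t > 0 set I(t) = ∫_ℝ [f(x) - (2πt)^{-1/2} e^{-x²/(2t)}]² dx. Then I'(t) = (√2/π)·Γ(3/2)·t^{-3/2}·[F(1/t) - 2^{-3/2}], where F(y) = ∫₀^∞ (1+vy)^{-3/2} μ(dv). In particular, a point t > 0 is a critical point of I if and only if ∫₀^∞ (t+v)^{-3/2} μ(dv) = (2t)^{-3/2}. -/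
/-!
Expanding the square, `I(t) = ‖f‖² - 2⟨f, g_t⟩ + ‖g_t‖²`, where `g_t` is the `N(0,t)` density.
The product of two centred Gaussian densities of variances `v`, `s` integrates to
`(2π(v+s))^(-1/2)`, so by Fubini `⟨f, g_t⟩ = (2π)^(-1/2) ∫ (t+v)^(-1/2) dμ` and
`‖g_t‖² = (2π)^(-1/2) (2t)^(-1/2)`. Differentiating under the integral sign (the `t`-derivative
of `(t+v)^(-1/2)` is bounded uniformly in `v ≥ 0` near `t`) gives
`I'(t) = (2π)^(-1/2) [∫ (t+v)^(-3/2) dμ - (2t)^(-3/2)]`, and `√2 Γ(3/2) / π = (2π)^(-1/2)`.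
-/

open MeasureTheory Real Set

lemma integral_sub_sq {α : Type*} [MeasurableSpace α] {μ : Measure α} {f g : α → ℝ}
    (hf : MemLp f 2 μ) (hg : MemLp g 2 μ) :
    ∫ x, (f x - g x) ^ 2 ∂μ = ∫ x, f x ^ 2 ∂μ - 2 * ∫ x, f x * g x ∂μ + ∫ x, g x ^ 2 ∂μ := by
  have hfg : Integrable (fun x ↦ f x * g x) μ := hf.integrable_mul hg
  have hexpand : ∀ x, (f x - g x) ^ 2 = f x ^ 2 - 2 * (f x * g x) + g x ^ 2 := fun x ↦ by ring
  simp_rw [hexpand]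
  rw [integral_add (f := fun x ↦ f x ^ 2 - 2 * (f x * g x))
      (hf.integrable_sq.sub (hfg.const_mul 2)) hg.integrable_sq,
    integral_sub hf.integrable_sq (hfg.const_mul 2), integral_const_mul]

noncomputable def gaussianDensity (v x : ℝ) : ℝ := exp (-x ^ 2 / (2 * v)) / √(2 * π * v)

lemma gaussianDensity_nonneg (v x : ℝ) : 0 ≤ gaussianDensity v x :=
  div_nonneg (exp_pos _).le (sqrt_nonneg _)

lemma gaussianDensity_mul_gaussianDensity (v s x : ℝ) :
    gaussianDensity v x * gaussianDensity s x =
      (√(2 * π * v) * √(2 * π * s))⁻¹ * exp (-((2 * v)⁻¹ + (2 * s)⁻¹) * x ^ 2) := by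
  rw [gaussianDensity, gaussianDensity, div_mul_div_comm, ← exp_add, div_eq_inv_mul]
  ring_nf

lemma integrable_gaussianDensity_mul {v s : ℝ} (hv : 0 < v) (hs : 0 < s) :
    Integrable (fun x ↦ gaussianDensity v x * gaussianDensity s x) := by
  simp_rw [gaussianDensity_mul_gaussianDensity]
  exact (integrable_exp_neg_mul_sq (by positivity)).const_mul _

lemma integral_gaussianDensity_mul {v s : ℝ} (hv : 0 < v) (hs : 0 < s) :
    ∫ x, gaussianDensity v x * gaussianDensity s x =
      (2 * π) ^ (-(1 / 2 : ℝ)) * (v + s) ^ (-(1 / 2 : ℝ)) := by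
  simp_rw [gaussianDensity_mul_gaussianDensity]
  rw [integral_const_mul, integral_gaussian, ← mul_rpow (by positivity) (by positivity),
    rpow_neg (by positivity), ← sqrt_eq_rpow, ← sqrt_mul (by positivity),
    ← sqrt_inv, ← sqrt_mul (by positivity), ← sqrt_inv]
  congr 1
  field_simp
  ring

lemma memLp_two_gaussianDensity {v : ℝ} (hv : 0 < v) : MemLp (gaussianDensity v) 2 := by
  rw [memLp_two_iff_integrable_sq (by unfold gaussianDensity; fun_prop)]
  simpa only [sq] using integrable_gaussianDensity_mul hv hv

lemma integral_mixture_mul_gaussianDensity {μ : Measure ℝ} [IsFiniteMeasure μ]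
    (hμ : ∀ᵐ v ∂μ, 0 < v) {s : ℝ} (hs : 0 < s) :
    ∫ x, (∫ v, gaussianDensity v x ∂μ) * gaussianDensity s x =
      (2 * π) ^ (-(1 / 2 : ℝ)) * ∫ v, (s + v) ^ (-(1 / 2 : ℝ)) ∂μ := by
  have hint : Integrable (fun p : ℝ × ℝ ↦ gaussianDensity p.2 p.1 * gaussianDensity s p.1)
      (volume.prod μ) := by
    have hmeas : StronglyMeasurable
        (fun p : ℝ × ℝ ↦ gaussianDensity p.2 p.1 * gaussianDensity s p.1) := by
      unfold gaussianDensity; fun_prop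
    refine (integrable_prod_iff' hmeas.aestronglyMeasurable).2 ⟨?_, ?_⟩
    · filter_upwards [hμ] with v hv using integrable_gaussianDensity_mul hv hs
    · refine (integrable_const ((2 * π) ^ (-(1 / 2 : ℝ)) * s ^ (-(1 / 2 : ℝ)))).mono' ?_ ?_
      · exact hmeas.norm.integral_prod_left'.aestronglyMeasurable
      · filter_upwards [hμ] with v hv
        simp_rw [norm_of_nonneg
          (mul_nonneg (gaussianDensity_nonneg _ _) (gaussianDensity_nonneg _ _))]
        rw [integral_gaussianDensity_mul hv hs, norm_of_nonneg (by positivity)]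
        exact mul_le_mul_of_nonneg_left
          (rpow_le_rpow_of_nonpos hs (by linarith) (by norm_num)) (by positivity)
  simp_rw [← integral_mul_const]
  rw [integral_integral_swap hint, ← integral_const_mul]
  refine integral_congr_ae ?_
  filter_upwards [hμ] with v hv
  rw [integral_gaussianDensity_mul hv hs, add_comm]

lemma hasDerivAt_integral_add_rpow {μ : Measure ℝ} [IsFiniteMeasure μ] (hμ : ∀ᵐ v ∂μ, 0 ≤ v)
    {p t : ℝ} (hp : p ≤ 0) (ht : 0 < t) :
    HasDerivAt (fun s ↦ ∫ v, (s + v) ^ p ∂μ) (p * ∫ v, (t + v) ^ (p - 1) ∂μ) t := by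
  have hball : ∀ s ∈ Metric.ball t (t / 2), t / 2 < s := fun s hs ↦ by
    rw [Metric.mem_ball, dist_eq_norm, norm_eq_abs, abs_lt] at hs; linarith
  rw [← integral_const_mul]
  refine (hasDerivAt_integral_of_dominated_loc_of_deriv_le (F := fun s v ↦ (s + v) ^ p)
    (F' := fun s v ↦ p * (s + v) ^ (p - 1)) (bound := fun _ ↦ |p| * (t / 2) ^ (p - 1))
    (Metric.ball_mem_nhds t (half_pos ht))
    (.of_forall fun s ↦ (by fun_prop : Measurable _).aestronglyMeasurable) ?_
    (by fun_prop : Measurable _).aestronglyMeasurable ?_ (integrable_const _) ?_).2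
  · refine (integrable_const (t ^ p)).mono' (by fun_prop : Measurable _).aestronglyMeasurable ?_
    filter_upwards [hμ] with v hv
    rw [norm_of_nonneg (by positivity)]
    exact rpow_le_rpow_of_nonpos ht (by linarith) hp
  · filter_upwards [hμ] with v hv s hs
    have hs' := hball s hs
    rw [norm_mul, norm_eq_abs, norm_of_nonneg (rpow_nonneg (by linarith) _)]
    exact mul_le_mul_of_nonneg_left
      (rpow_le_rpow_of_nonpos (by positivity) (by linarith) (by linarith)) (abs_nonneg p)
  · filter_upwards [hμ] with v hv s hs
    have hs' := hball s hs
    simpa using ((hasDerivAt_id' s).add_const v).rpow_const (p := p) (Or.inl (by linarith))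

lemma sqrt_two_div_pi_mul_Gamma_three_halves :
    √2 / π * Gamma (3 / 2) = (2 * π) ^ (-(1 / 2 : ℝ)) := by
  rw [show (3 / 2 : ℝ) = 1 / 2 + 1 by norm_num, Gamma_add_one (by norm_num), Gamma_one_half_eq,
    rpow_neg (by positivity), ← sqrt_eq_rpow, sqrt_mul zero_le_two]
  have hπ : √π ≠ 0 := by positivity
  have h2 : √2 ≠ 0 := by positivity
  field_simp
  rw [sq_sqrt zero_le_two, sq_sqrt pi_pos.le, mul_comm]

lemma rpow_mul_integral_one_add_mul_inv {μ : Measure ℝ} (hμ : ∀ᵐ v ∂μ, 0 ≤ v) {t : ℝ}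
    (ht : 0 < t) (p : ℝ) :
    t ^ p * ∫ v, (1 + v * (1 / t)) ^ p ∂μ = ∫ v, (t + v) ^ p ∂μ := by
  rw [← integral_const_mul]
  refine integral_congr_ae ?_
  filter_upwards [hμ] with v hv
  rw [← mul_rpow ht.le (by positivity)]
  field_simp

lemma integral_sq_sub_gaussianDensity {μ : Measure ℝ} [IsFiniteMeasure μ] (hμ : ∀ᵐ v ∂μ, 0 < v)
    {f : ℝ → ℝ} (hf : ∀ x, f x = ∫ v, gaussianDensity v x ∂μ) (hL2 : MemLp f 2) {s : ℝ}
    (hs : 0 < s) :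
    ∫ x, (f x - gaussianDensity s x) ^ 2 = (∫ x, f x ^ 2) -
      2 * ((2 * π) ^ (-(1 / 2 : ℝ)) * ∫ v, (s + v) ^ (-(1 / 2 : ℝ)) ∂μ) +
      (2 * π) ^ (-(1 / 2 : ℝ)) * (2 * s) ^ (-(1 / 2 : ℝ)) := by
  rw [integral_sub_sq hL2 (memLp_two_gaussianDensity hs)]
  simp_rw [sq (gaussianDensity s _), integral_gaussianDensity_mul hs hs, hf,
    integral_mixture_mul_gaussianDensity hμ hs, two_mul s]

lemma hasDerivAt_const_sub_integral_add_rpow_add_rpow {μ : Measure ℝ} [IsFiniteMeasure μ]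
    (hμ : ∀ᵐ v ∂μ, 0 ≤ v) (A c : ℝ) {t : ℝ} (ht : 0 < t) :
    HasDerivAt (fun s ↦ A - 2 * (c * ∫ v, (s + v) ^ (-(1 / 2 : ℝ)) ∂μ) +
        c * (2 * s) ^ (-(1 / 2 : ℝ)))
      (c * ((∫ v, (t + v) ^ (-(3 : ℝ) / 2) ∂μ) - (2 * t) ^ (-(3 : ℝ) / 2))) t := by
  have hB := hasDerivAt_integral_add_rpow hμ (by norm_num : -(1 / 2 : ℝ) ≤ 0) ht
  have hG := ((hasDerivAt_id' t).const_mul 2).rpow_const (p := -(1 / 2 : ℝ))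
    (Or.inl (by positivity))
  refine (((hasDerivAt_const t A).sub ((hB.const_mul c).const_mul 2)).add
    (hG.const_mul c)).congr_deriv ?_
  rw [show -(1 / 2 : ℝ) - 1 = -3 / 2 by norm_num]
  ring

/-- Derivative of the L² discrepancy `I(t)` between the Gaussian scale mixture density `f`
and the `N(0,t)` density, and characterization of critical points. -/
theorem deriv_of_L2_discrepancy
    (μ : Measure ℝ) [IsProbabilityMeasure μ] (hμ : μ (Iic 0) = 0)
    (f : ℝ → ℝ)
    (hf : ∀ x, f x = ∫ v, Real.exp (-x ^ 2 / (2 * v)) / Real.sqrt (2 * π * v) ∂μ)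
    (hL2 : MemLp f 2 volume)
    (I : ℝ → ℝ)
    (hI : ∀ t, I t =
        ∫ x, (f x - (1 / Real.sqrt (2 * π * t)) * Real.exp (-x ^ 2 / (2 * t))) ^ 2)
    (F : ℝ → ℝ)
    (hF : ∀ y, F y = ∫ v, (1 + v * y) ^ (-(3 : ℝ) / 2) ∂μ)
    (t : ℝ) (ht : 0 < t) :
    HasDerivAt I
        (Real.sqrt 2 / π * Real.Gamma (3 / 2) * t ^ (-(3 : ℝ) / 2) *
          (F (1 / t) - 2 ^ (-(3 : ℝ) / 2))) t ∧
      (Real.sqrt 2 / π * Real.Gamma (3 / 2) * t ^ (-(3 : ℝ) / 2) *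
            (F (1 / t) - 2 ^ (-(3 : ℝ) / 2)) = 0 ↔
        (∫ v, (t + v) ^ (-(3 : ℝ) / 2) ∂μ) = (2 * t) ^ (-(3 : ℝ) / 2)) := by
  have hpos : ∀ᵐ v ∂μ, 0 < v := by
    rw [ae_iff]; simp only [not_lt]; exact hμ
  have hnonneg : ∀ᵐ v ∂μ, 0 ≤ v := hpos.mono fun v hv ↦ hv.le
  set c : ℝ := (2 * π) ^ (-(1 / 2 : ℝ))
  have hcoef : √2 / π * Gamma (3 / 2) * t ^ (-(3 : ℝ) / 2) * (F (1 / t) - 2 ^ (-(3 : ℝ) / 2)) =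
      c * ((∫ v, (t + v) ^ (-(3 : ℝ) / 2) ∂μ) - (2 * t) ^ (-(3 : ℝ) / 2)) := by
    rw [sqrt_two_div_pi_mul_Gamma_three_halves, hF, mul_assoc, mul_sub,
      rpow_mul_integral_one_add_mul_inv hnonneg ht,
      ← mul_rpow ht.le zero_le_two, mul_comm t]
  have hIeq : ∀ s, 0 < s → I s = (∫ x, f x ^ 2) -
      2 * (c * ∫ v, (s + v) ^ (-(1 / 2 : ℝ)) ∂μ) + c * (2 * s) ^ (-(1 / 2 : ℝ)) := fun s hs ↦ by
    rw [hI, ← integral_sq_sub_gaussianDensity hpos hf hL2 hs]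
    simp only [gaussianDensity, div_eq_inv_mul, one_mul, mul_comm]
  have hc : c ≠ 0 := by positivity
  rw [hcoef, mul_eq_zero, sub_eq_zero, or_iff_right hc]
  refine ⟨(hasDerivAt_const_sub_integral_add_rpow_add_rpow hnonneg (∫ x, f x ^ 2) c ht)
    |>.congr_of_eventuallyEq ?_, Iff.rfl⟩
  filter_upwards [Ioi_mem_nhds ht] with s hs using hIeq s hs
end

section
/- Let ν be a probability measure on (0,∞) and suppose t = diag(t₁,…,tₙ) with tᵢ > 0 minimizes I₁*(t₁,…,tₙ) = π^{n/2}/√(t₁⋯tₙ) − 2∫₀^∞ ∏ᵢ(tᵢ+λ)^{-1/2} ν(dλ) over (0,∞)ⁿ. Then t₁ = t₂ = ⋯ = tₙ. -/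
/-!
If `tᵢ ≠ tⱼ`, replace both by their geometric mean `√(tᵢ tⱼ)`. This keeps `t₁⋯tₙ`, hence the
first term of `I₁*`, while for `λ > 0` AM–GM gives `(√(tᵢ tⱼ) + λ)² < (tᵢ + λ)(tⱼ + λ)`, so the
integrand increases strictly `ν`-a.e. and the competitor has strictly smaller `I₁*`.
Integrability is automatic: for `λ ≥ 0` the integrand is bounded by `∏ tᵢ^{-1/2}`.
-/

open MeasureTheory Real Set

theorem Finset.prod_mul_mul_eq_of_eq_off_pair {ι M : Type*} [Fintype ι] [DecidableEq ι]
    [CommMonoid M] {G H : ι → M} {i j : ι} (hij : i ≠ j)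
    (hGH : ∀ k, k ≠ i → k ≠ j → G k = H k) :
    (∏ k, G k) * (H i * H j) = (∏ k, H k) * (G i * G j) := by
  have hj : j ∈ Finset.univ.erase i := Finset.mem_erase.mpr ⟨hij.symm, Finset.mem_univ j⟩
  have split : ∀ F : ι → M,
      ∏ k, F k = F i * F j * ∏ k ∈ (Finset.univ.erase i).erase j, F k := fun F => by
    rw [← Finset.mul_prod_erase _ F (Finset.mem_univ i), ← Finset.mul_prod_erase _ F hj,
      mul_assoc]
  have hrest : ∏ k ∈ (Finset.univ.erase i).erase j, G k
      = ∏ k ∈ (Finset.univ.erase i).erase j, H k :=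
    Finset.prod_congr rfl fun k hk => by
      obtain ⟨hkj, hk⟩ := Finset.mem_erase.mp hk
      exact hGH k (Finset.ne_of_mem_erase hk) hkj
  rw [split G, split H, hrest]
  ac_rfl

theorem sq_sqrt_mul_add_lt_mul_add {a b l : ℝ} (ha : 0 ≤ a) (hb : 0 ≤ b) (hab : a ≠ b)
    (hl : 0 < l) : (√(a * b) + l) ^ 2 < (a + l) * (b + l) := by
  have hsa := Real.sq_sqrt ha
  have hsb := Real.sq_sqrt hb
  have hne : √a - √b ≠ 0 := fun h => hab (by rw [← hsa, ← hsb, sub_eq_zero.mp h])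
  have hpos : 0 < l * (√a - √b) ^ 2 := by positivity
  rw [Real.sqrt_mul ha]
  nlinarith

theorem rpow_add_mul_rpow_add_lt {a b l r : ℝ} (ha : 0 ≤ a) (hb : 0 ≤ b) (hab : a ≠ b)
    (hl : 0 < l) (hr : r < 0) :
    (a + l) ^ r * (b + l) ^ r < (√(a * b) + l) ^ r * (√(a * b) + l) ^ r := by
  have hg : 0 < √(a * b) + l := by positivity
  rw [← Real.mul_rpow (by positivity) (by positivity), ← Real.mul_rpow hg.le hg.le, ← sq]
  exact Real.rpow_lt_rpow_of_neg (by positivity) (sq_sqrt_mul_add_lt_mul_add ha hb hab hl) hr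

-- The witness replaces `t i` and `t j` by their geometric mean.
theorem exists_prod_eq_and_prod_rpow_add_lt {ι : Type*} [Fintype ι] [DecidableEq ι]
    {t : ι → ℝ} (ht : ∀ k, 0 < t k) {i j : ι} (hne : t i ≠ t j) {r : ℝ} (hr : r < 0) :
    ∃ s : ι → ℝ, (∀ k, 0 < s k) ∧ ∏ k, s k = ∏ k, t k ∧
      ∀ l, 0 < l → ∏ k, (t k + l) ^ r < ∏ k, (s k + l) ^ r := by
  have hij : i ≠ j := fun h => hne (congrArg t h)
  set g := √(t i * t j)
  set s := Function.update (Function.update t i g) j g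
  have hsi : s i = g := by simp [s, Function.update_of_ne hij]
  have hsj : s j = g := by simp [s]
  have hs_off : ∀ k, k ≠ i → k ≠ j → s k = t k := fun k hki hkj => by
    simp [s, Function.update_of_ne hkj, Function.update_of_ne hki]
  have hg : 0 < g := Real.sqrt_pos.mpr (mul_pos (ht i) (ht j))
  refine ⟨s, fun k => ?_, ?_, fun l hl => ?_⟩
  · by_cases hki : k = i
    · rw [hki, hsi]; exact hg
    by_cases hkj : k = j
    · rw [hkj, hsj]; exact hg
    rw [hs_off k hki hkj]; exact ht k
  · have key := Finset.prod_mul_mul_eq_of_eq_off_pair (G := s) (H := t) hij hs_off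
    rw [hsi, hsj, Real.mul_self_sqrt (mul_pos (ht i) (ht j)).le] at key
    exact mul_right_cancel₀ (mul_pos (ht i) (ht j)).ne' key
  · set F : ℝ → ℝ := fun x => (x + l) ^ r
    have hF : ∀ k, 0 < F (t k) := fun k => Real.rpow_pos_of_pos (by linarith [ht k]) r
    have key := Finset.prod_mul_mul_eq_of_eq_off_pair (G := F ∘ s) (H := F ∘ t) hij
      fun k hki hkj => by simp [hs_off k hki hkj]
    simp only [Function.comp_apply, hsi, hsj] at key
    have hmean : F (t i) * F (t j) < F g * F g :=
      rpow_add_mul_rpow_add_lt (ht i).le (ht j).le hne hl hr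
    have hP : 0 < ∏ k, F (t k) := Finset.prod_pos fun k _ => hF k
    have hpair : 0 < F (t i) * F (t j) := mul_pos (hF i) (hF j)
    by_contra! hle
    nlinarith

theorem ae_pos_of_measure_Iic_eq_zero {ν : Measure ℝ} (hν : ν (Iic 0) = 0) :
    ∀ᵐ l ∂ν, 0 < l :=
  (measure_eq_zero_iff_ae_notMem.mp hν).mono fun _ hl => not_le.mp hl

theorem integrable_prod_rpow_add {ι : Type*} [Fintype ι] {ν : Measure ℝ} [IsFiniteMeasure ν]
    (hν : ∀ᵐ l ∂ν, 0 ≤ l) {t : ι → ℝ} (ht : ∀ k, 0 < t k) {r : ℝ} (hr : r ≤ 0) :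
    Integrable (fun l => ∏ k, (t k + l) ^ r) ν := by
  have hmeas : Measurable fun l => ∏ k, (t k + l) ^ r :=
    Finset.measurable_prod _ fun k _ => (measurable_const.add measurable_id).pow_const r
  refine .of_bound hmeas.aestronglyMeasurable (∏ k, t k ^ r) (hν.mono fun l hl => ?_)
  have hpos : ∀ k, 0 < t k + l := fun k => by linarith [ht k]
  rw [Real.norm_of_nonneg (Finset.prod_nonneg fun k _ => (Real.rpow_pos_of_pos (hpos k) r).le)]
  exact Finset.prod_le_prod (fun k _ => (Real.rpow_pos_of_pos (hpos k) r).le)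
    fun k _ => Real.rpow_le_rpow_of_nonpos (ht k) (by linarith) hr

theorem integral_lt_integral_of_ae_lt {α : Type*} [MeasurableSpace α] {μ : Measure α}
    [NeZero μ] {f g : α → ℝ} (hf : Integrable f μ) (hg : Integrable g μ)
    (hlt : ∀ᵐ x ∂μ, f x < g x) : ∫ x, f x ∂μ < ∫ x, g x ∂μ := by
  rw [← sub_pos, ← integral_sub hg hf,
    integral_pos_iff_support_of_nonneg_ae (hlt.mono fun x hx => (sub_pos.mpr hx).le) (hg.sub hf),
    pos_iff_ne_zero]
  intro hnull
  have hfalse : ∀ᵐ x ∂μ, False := by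
    filter_upwards [measure_eq_zero_iff_ae_notMem.mp hnull, hlt] with x hx hx'
    exact hx (sub_pos.mpr hx').ne'
  exact NeZero.ne μ (ae_eq_bot.mp (Filter.eventually_false_iff_eq_bot.mp hfalse))

theorem minimizer_of_diagonal_discrepancy_is_scalar_general (n : ℕ)
    (ν : Measure ℝ) [IsProbabilityMeasure ν] (hν : ν (Iic 0) = 0)
    (I₁ : (Fin n → ℝ) → ℝ)
    (hI₁ : ∀ t : Fin n → ℝ, I₁ t =
        π ^ ((n : ℝ) / 2) / Real.sqrt (∏ i, t i) -
          2 * ∫ l, ∏ i, (t i + l) ^ (-(1 : ℝ) / 2) ∂ν)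
    (t : Fin n → ℝ) (ht : ∀ i, 0 < t i)
    (hmin : ∀ s : Fin n → ℝ, (∀ i, 0 < s i) → I₁ t ≤ I₁ s) :
    ∀ i j : Fin n, t i = t j := by
  intro i j
  by_contra hne
  have hr : -(1 : ℝ) / 2 < 0 := by norm_num
  obtain ⟨s, hs, hprod, hlt⟩ := exists_prod_eq_and_prod_rpow_add_lt ht hne hr
  have hpos := ae_pos_of_measure_Iic_eq_zero hν
  have hnonneg : ∀ᵐ l ∂ν, 0 ≤ l := hpos.mono fun _ hl => hl.le
  have hint : ∫ l, ∏ k, (t k + l) ^ (-(1 : ℝ) / 2) ∂ν < ∫ l, ∏ k, (s k + l) ^ (-(1 : ℝ) / 2) ∂ν :=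
    integral_lt_integral_of_ae_lt (integrable_prod_rpow_add hnonneg ht hr.le)
      (integrable_prod_rpow_add hnonneg hs hr.le) (hpos.mono hlt)
  have hle := hmin s hs
  rw [hI₁ t, hI₁ s, hprod] at hle
  linarith

/-- If a positive tuple `(t₁,…,tₙ)` minimizes
`I₁*(t) = π^{n/2}/√(t₁⋯tₙ) − 2∫ ∏ᵢ (tᵢ+λ)^{-1/2} ν(dλ)`, then all the `tᵢ` are equal. -/
theorem minimizer_of_diagonal_discrepancy_is_scalar (n : ℕ)
    (ν : Measure ℝ) [IsProbabilityMeasure ν] (hν : ν (Iic 0) = 0)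
    (hint : (∫⁻ p : ℝ × ℝ, ENNReal.ofReal ((p.1 + p.2) ^ (-(n : ℝ) / 2)) ∂(ν.prod ν)) < ⊤)
    (I₁ : (Fin n → ℝ) → ℝ)
    (hI₁ : ∀ t : Fin n → ℝ, I₁ t =
        π ^ ((n : ℝ) / 2) / Real.sqrt (∏ i, t i) -
          2 * ∫ l, ∏ i, (t i + l) ^ (-(1 : ℝ) / 2) ∂ν)
    (t : Fin n → ℝ) (ht : ∀ i, 0 < t i)
    (hmin : ∀ s : Fin n → ℝ, (∀ i, 0 < s i) → I₁ t ≤ I₁ s) :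
    ∀ i j : Fin n, t i = t j :=
  minimizer_of_diagonal_discrepancy_is_scalar_general n ν hν I₁ hI₁ t ht hmin
end
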